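/- arXiv:2603.28739 — 3 statements merged into one kernel-verified Lean document; each statement's English description precedes it below -/
import Mathlib

section
/- Let the auxiliary tasks be weighted by λ_1,…,λ_K ≥ 0 with Λ := Σ_{k=1}^K λ_k > 0, λ'_k := λ_k/Λ, and w*_aux := Σ_{k=1}^K λ'_k w*_k. Then E_K < E_0 holds if and only if ((Σ_{k=1}^K (λ'_k)² σ_k² − σ_m²)·d/(N−d−1) + ||Σ_x^{1/2}(w*_aux − w*_m)||²)·Λ < 2 σ_m²·d/(N−d−1), where E_K = ((σ_m² + Σ_k λ_k² σ_k²)/(1+Λ)²)·d/(N−d−1) + (Λ/(1+Λ))²·||Σ_x^{1/2}(w*_aux − w*_m)||² + σ_m² and E_0 = σ_m²·d/(N−d−1) + σ_m². -/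
open Matrix

noncomputable section

namespace Stmt1

/-- The quadratic form `vᵀ Σ v`, which equals `‖Σ^{1/2} v‖²` for positive semidefinite `Σ`. -/
def quadForm {d : ℕ} (Sigx : Matrix (Fin d) (Fin d) ℝ) (v : Fin d → ℝ) : ℝ :=
  v ⬝ᵥ (Sigx *ᵥ v)

/-- The closed-form expected main-task generalization error `E_K` of the weighted
least-squares estimator with auxiliary task weights `lam`, true task models `wm`, `wk`,
noise standard deviations `σm`, `σa`, and feature covariance `Sigx`. -/
def EKform (N d K : ℕ) (Sigx : Matrix (Fin d) (Fin d) ℝ) (wm : Fin d → ℝ)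
    (wk : Fin K → Fin d → ℝ) (σm : ℝ) (σa : Fin K → ℝ) (lam : Fin K → ℝ) : ℝ :=
  ((σm ^ 2 + ∑ k, lam k ^ 2 * σa k ^ 2) / (1 + ∑ k, lam k) ^ 2) *
      ((d : ℝ) / ((N : ℝ) - (d : ℝ) - 1)) +
    ((∑ k, lam k) / (1 + ∑ k, lam k)) ^ 2 *
      quadForm Sigx ((1 / ∑ k, lam k) • (∑ k, lam k • wk k) - wm) +
    σm ^ 2

/-- The closed-form expected main-task generalization error `E_0` of ordinary least
squares trained on the main task alone. -/
def E0form (N d : ℕ) (σm : ℝ) : ℝ :=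
  σm ^ 2 * ((d : ℝ) / ((N : ℝ) - (d : ℝ) - 1)) + σm ^ 2

/-!
Writing `Λ = ∑ λ_k` and `L`, `R` for the two sides of the criterion, clearing
denominators gives `E_0 - E_K = (R - L) · Λ/(1+Λ)²`; the prefactor is positive,
so `E_K < E_0` exactly when `L < R`.
-/

theorem sum_div_smul_eq_one_div_smul_sum {ι M : Type*} [AddCommMonoid M] [Module ℝ M]
    (s : Finset ι) (a : ι → ℝ) (c : ℝ) (w : ι → M) :
    ∑ k ∈ s, (a k / c) • w k = (1 / c) • ∑ k ∈ s, a k • w k := by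
  simp only [Finset.smul_sum, smul_smul, div_eq_inv_mul, mul_one]

theorem sum_div_sq_mul {ι : Type*} (s : Finset ι) (a b : ι → ℝ) (c : ℝ) :
    ∑ k ∈ s, (a k / c) ^ 2 * b k = (∑ k ∈ s, a k ^ 2 * b k) / c ^ 2 := by
  simp only [Finset.sum_div, div_pow, div_mul_eq_mul_div]

theorem E0form_sub_EKform (N d K : ℕ) (Sigx : Matrix (Fin d) (Fin d) ℝ) (wm : Fin d → ℝ)
    (wk : Fin K → Fin d → ℝ) (σm : ℝ) (σa : Fin K → ℝ) (lam : Fin K → ℝ)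
    (hΛ : 0 < ∑ k, lam k) :
    E0form N d σm - EKform N d K Sigx wm wk σm σa lam =
      (2 * σm ^ 2 * ((d : ℝ) / ((N : ℝ) - (d : ℝ) - 1)) -
          ((∑ k, (lam k / ∑ k', lam k') ^ 2 * σa k ^ 2 - σm ^ 2) *
                ((d : ℝ) / ((N : ℝ) - (d : ℝ) - 1)) +
              quadForm Sigx ((∑ k, (lam k / ∑ k', lam k') • wk k) - wm)) * (∑ k, lam k)) *
        ((∑ k, lam k) / (1 + ∑ k, lam k) ^ 2) := by
  rw [E0form, EKform, sum_div_sq_mul, sum_div_smul_eq_one_div_smul_sum]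
  have : 1 + ∑ k, lam k ≠ 0 := by positivity
  field_simp
  ring

theorem aux_helps_iff_general
    (N d K : ℕ)
    (Sigx : Matrix (Fin d) (Fin d) ℝ)
    (wm : Fin d → ℝ) (wk : Fin K → Fin d → ℝ)
    (σm : ℝ) (σa : Fin K → ℝ)
    (lam : Fin K → ℝ) (hΛ : 0 < ∑ k, lam k) :
    EKform N d K Sigx wm wk σm σa lam < E0form N d σm ↔
      ((∑ k, (lam k / ∑ k', lam k') ^ 2 * σa k ^ 2 - σm ^ 2) *
            ((d : ℝ) / ((N : ℝ) - (d : ℝ) - 1)) +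
          quadForm Sigx ((∑ k, (lam k / ∑ k', lam k') • wk k) - wm)) * (∑ k, lam k) <
        2 * σm ^ 2 * ((d : ℝ) / ((N : ℝ) - (d : ℝ) - 1)) := by
  rw [← sub_pos, E0form_sub_EKform N d K Sigx wm wk σm σa lam hΛ, mul_pos_iff_of_pos_right
    (by positivity), sub_pos]

/-- Corollary 3.2: with `Λ = ∑ λ_k > 0` and `λ'_k = λ_k / Λ`,
auxiliary learning is beneficial, i.e. `E_K < E_0`, if and only if
`((∑ (λ'_k)² σ_k² − σ_m²)·d/(N−d−1) + ‖Σ_x^{1/2}(w*_aux − w*_m)‖²)·Λ < 2 σ_m²·d/(N−d−1)`. -/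
theorem aux_helps_iff
    (N d K : ℕ) (hN : d + 1 < N)
    (Sigx : Matrix (Fin d) (Fin d) ℝ) (hSig : Sigx.PosDef)
    (wm : Fin d → ℝ) (wk : Fin K → Fin d → ℝ)
    (σm : ℝ) (hσm : 0 < σm) (σa : Fin K → ℝ) (hσa : ∀ k, 0 < σa k)
    (lam : Fin K → ℝ) (hlam : ∀ k, 0 ≤ lam k) (hΛ : 0 < ∑ k, lam k) :
    EKform N d K Sigx wm wk σm σa lam < E0form N d σm ↔
      ((∑ k, (lam k / ∑ k', lam k') ^ 2 * σa k ^ 2 - σm ^ 2) *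
            ((d : ℝ) / ((N : ℝ) - (d : ℝ) - 1)) +
          quadForm Sigx ((∑ k, (lam k / ∑ k', lam k') • wk k) - wm)) * (∑ k, lam k) <
        2 * σm ^ 2 * ((d : ℝ) / ((N : ℝ) - (d : ℝ) - 1)) :=
  aux_helps_iff_general N d K Sigx wm wk σm σa lam hΛ

end Stmt1
end
end

section
/- For α in the simplex Δ_K = {α ∈ R^K : α_k ≥ 0, Σ_k α_k = 1}, define f(α) = (d/(N−d−1)) Σ_{k=1}^K α_k² σ_k² + δ(α)^T Σ_x δ(α), where δ(α) = Σ_{k=1}^K α_k w*_k − w*_m. Let λ'* ∈ argmin_{α ∈ Δ_K} f(α) and suppose f(λ'*) > 0; set Λ* = σ_m²·(d/(N−d−1))·(1/f(λ'*)) and λ*_k = Λ* λ'*_k. Then the weights (λ*_1,…,λ*_K) minimize E_K(λ) = ((σ_m² + Σ_k λ_k² σ_k²)/(1+Σ_k λ_k)²)·d/(N−d−1) + ((Σ_k λ_k)/(1+Σ_k λ_k))²·||Σ_x^{1/2}((Σ_k λ_k w*_k)/(Σ_k λ_k) − w*_m)||² + σ_m² over all λ ∈ R^K with λ_k ≥ 0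 and Σ_k λ_k > 0. Moreover, when K = 1, λ'* = 1 and λ* = Λ*. -/
open Matrix

noncomputable section

namespace Stmt2

/-- The quadratic form `vᵀ Σ v`, which equals `‖Σ^{1/2} v‖²` for positive semidefinite `Σ`. -/
def quadForm {d : ℕ} (Sigx : Matrix (Fin d) (Fin d) ℝ) (v : Fin d → ℝ) : ℝ :=
  v ⬝ᵥ (Sigx *ᵥ v)

/-- The closed-form expected main-task generalization error `E_K(λ)`. -/
def EKform (N d K : ℕ) (Sigx : Matrix (Fin d) (Fin d) ℝ) (wm : Fin d → ℝ)
    (wk : Fin K → Fin d → ℝ) (σm : ℝ) (σa : Fin K → ℝ) (lam : Fin K → ℝ) : ℝ :=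
  ((σm ^ 2 + ∑ k, lam k ^ 2 * σa k ^ 2) / (1 + ∑ k, lam k) ^ 2) *
      ((d : ℝ) / ((N : ℝ) - (d : ℝ) - 1)) +
    ((∑ k, lam k) / (1 + ∑ k, lam k)) ^ 2 *
      quadForm Sigx ((1 / ∑ k, lam k) • (∑ k, lam k • wk k) - wm) +
    σm ^ 2

/-- Membership in the simplex `Δ_K`. -/
def memSimplex {K : ℕ} (α : Fin K → ℝ) : Prop :=
  (∀ k, 0 ≤ α k) ∧ ∑ k, α k = 1

/-- The objective `f(α) = (d/(N−d−1)) ∑ α_k² σ_k² + δ(α)ᵀ Σ_x δ(α)`,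
where `δ(α) = ∑ α_k w*_k − w*_m`. -/
def fObj (N d K : ℕ) (Sigx : Matrix (Fin d) (Fin d) ℝ) (wm : Fin d → ℝ)
    (wk : Fin K → Fin d → ℝ) (σa : Fin K → ℝ) (α : Fin K → ℝ) : ℝ :=
  ((d : ℝ) / ((N : ℝ) - (d : ℝ) - 1)) * (∑ k, α k ^ 2 * σa k ^ 2) +
    quadForm Sigx ((∑ k, α k • wk k) - wm)

/-! Every admissible `λ` is `Λ • α` with `Λ = ∑ λ_k > 0` and `α` in the simplex, and then
`E_K(λ) - σ_m² = (A + Λ² f(α)) / (1 + Λ)²` with `A = σ_m² d/(N−d−1)`. For fixed `α` this is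
minimised over `Λ ≥ 0` at `Λ = A / f(α)` with value `A f(α) / (A + f(α))`, which is increasing in
`f(α)`; so the joint minimum is attained at `α = λ'*`, `Λ = Λ*`. -/

section Scalar

variable {A F S : ℝ}

theorem mul_div_add_le_add_sq_mul_div_one_add_sq (hA : 0 ≤ A) (hF : 0 < F) (hS : 0 ≤ S) :
    A * F / (A + F) ≤ (A + S ^ 2 * F) / (1 + S) ^ 2 := by
  rw [div_le_div_iff₀ (by positivity) (by positivity)]
  nlinarith [sq_nonneg (A - S * F)]

theorem add_sq_mul_div_one_add_sq_at_div (hF : 0 < F) :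
    (A + (A / F) ^ 2 * F) / (1 + A / F) ^ 2 = A * F / (A + F) := by
  field_simp
  ring

theorem add_sq_mul_div_one_add_sq_at_div_le {F₀ : ℝ} (hA : 0 ≤ A) (hF₀ : 0 < F₀) (hF : F₀ ≤ F)
    (hS : 0 ≤ S) :
    (A + (A / F₀) ^ 2 * F₀) / (1 + A / F₀) ^ 2 ≤ (A + S ^ 2 * F) / (1 + S) ^ 2 :=
  calc (A + (A / F₀) ^ 2 * F₀) / (1 + A / F₀) ^ 2 = A * F₀ / (A + F₀) :=
        add_sq_mul_div_one_add_sq_at_div hF₀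
    _ ≤ (A + S ^ 2 * F₀) / (1 + S) ^ 2 := mul_div_add_le_add_sq_mul_div_one_add_sq hA hF₀ hS
    _ ≤ (A + S ^ 2 * F) / (1 + S) ^ 2 := by gcongr

end Scalar

theorem memSimplex.eq_one {α : Fin 1 → ℝ} (h : memSimplex α) (k : Fin 1) : α k = 1 := by
  simpa [Subsingleton.elim k 0] using h.2

theorem memSimplex_inv_sum_smul {K : ℕ} {lam : Fin K → ℝ} (hnn : ∀ k, 0 ≤ lam k)
    (hS : 0 < ∑ k, lam k) : memSimplex ((∑ k, lam k)⁻¹ • lam) := by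
  refine ⟨fun k => mul_nonneg (inv_nonneg.2 hS.le) (hnn k), ?_⟩
  simp only [Pi.smul_apply, smul_eq_mul, ← Finset.mul_sum, inv_mul_cancel₀ hS.ne']

theorem EKform_smul (N d K : ℕ) (Sigx : Matrix (Fin d) (Fin d) ℝ) (wm : Fin d → ℝ)
    (wk : Fin K → Fin d → ℝ) (σm : ℝ) (σa : Fin K → ℝ) {α : Fin K → ℝ} (hα : ∑ k, α k = 1)
    {Λ : ℝ} (hΛ : 0 ≤ Λ) :
    EKform N d K Sigx wm wk σm σa (Λ • α) =
      (σm ^ 2 * ((d : ℝ) / ((N : ℝ) - (d : ℝ) - 1)) + Λ ^ 2 * fObj N d K Sigx wm wk σa α) /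
        (1 + Λ) ^ 2 + σm ^ 2 := by
  rcases hΛ.eq_or_lt with rfl | hΛ
  · simp [EKform, fObj]
  have hsum : ∑ k, (Λ • α) k = Λ := by
    simp only [Pi.smul_apply, smul_eq_mul, ← Finset.mul_sum, hα, mul_one]
  have hnoise : ∑ k, (Λ • α) k ^ 2 * σa k ^ 2 = Λ ^ 2 * ∑ k, α k ^ 2 * σa k ^ 2 := by
    simp only [Finset.mul_sum, Pi.smul_apply, smul_eq_mul]
    exact Finset.sum_congr rfl fun k _ => by ring
  have hmean : (1 / Λ) • ∑ k, (Λ • α) k • wk k = ∑ k, α k • wk k := by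
    simp only [Pi.smul_apply, smul_eq_mul, ← smul_smul, ← Finset.smul_sum, one_div,
      inv_smul_smul₀ hΛ.ne']
  rw [EKform, fObj, hsum, hnoise, hmean]
  field_simp
  ring

theorem optimal_weights_general
    (N d K : ℕ) (hN : d + 1 < N)
    (Sigx : Matrix (Fin d) (Fin d) ℝ)
    (wm : Fin d → ℝ) (wk : Fin K → Fin d → ℝ)
    (σm : ℝ) (σa : Fin K → ℝ)
    (lam' : Fin K → ℝ) (hmem : memSimplex lam')
    (hargmin : ∀ α : Fin K → ℝ, memSimplex α →
      fObj N d K Sigx wm wk σa lam' ≤ fObj N d K Sigx wm wk σa α)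
    (hfpos : 0 < fObj N d K Sigx wm wk σa lam')
    (Λstar : ℝ)
    (hΛstar : Λstar = σm ^ 2 * ((d : ℝ) / ((N : ℝ) - (d : ℝ) - 1)) *
      (1 / fObj N d K Sigx wm wk σa lam'))
    (lamstar : Fin K → ℝ) (hlamstar : ∀ k, lamstar k = Λstar * lam' k) :
    (∀ lam : Fin K → ℝ, (∀ k, 0 ≤ lam k) → 0 < ∑ k, lam k →
      EKform N d K Sigx wm wk σm σa lamstar ≤ EKform N d K Sigx wm wk σm σa lam) ∧
    (K = 1 → ∀ k, lam' k = 1 ∧ lamstar k = Λstar) := by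
  have hc : 0 ≤ (d : ℝ) / ((N : ℝ) - (d : ℝ) - 1) := by
    have : (d : ℝ) + 1 < N := by exact_mod_cast hN
    exact div_nonneg d.cast_nonneg (by linarith)
  have hA : 0 ≤ σm ^ 2 * ((d : ℝ) / ((N : ℝ) - (d : ℝ) - 1)) := by positivity
  rw [mul_one_div] at hΛstar
  have hlamstar' : lamstar = Λstar • lam' := funext hlamstar
  refine ⟨fun lam hnn hS => ?_, ?_⟩
  · have hα := memSimplex_inv_sum_smul hnn hS
    rw [hlamstar', ← smul_inv_smul₀ hS.ne' lam, EKform_smul _ _ _ _ _ _ _ _ hα.2 hS.le,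
      EKform_smul _ _ _ _ _ _ _ _ hmem.2 (hΛstar ▸ by positivity), hΛstar]
    gcongr ?_ + _
    exact add_sq_mul_div_one_add_sq_at_div_le hA hfpos (hargmin _ hα) hS.le
  · rintro rfl k
    exact ⟨hmem.eq_one k, by rw [hlamstar, hmem.eq_one k, mul_one]⟩

/-- Theorem 3.2: the re-parameterized weights
`λ'* ∈ argmin_{α ∈ Δ_K} f(α)`, `Λ* = σ_m²·(d/(N−d−1))/f(λ'*)`, `λ*_k = Λ* λ'*_k`
globally minimize `E_K` over all nonnegative weights with positive total mass;
moreover `λ'* = 1` and `λ* = Λ*` when `K = 1`. -/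
theorem optimal_weights
    (N d K : ℕ) (hN : d + 1 < N)
    (Sigx : Matrix (Fin d) (Fin d) ℝ) (hSig : Sigx.PosDef)
    (wm : Fin d → ℝ) (wk : Fin K → Fin d → ℝ)
    (σm : ℝ) (hσm : 0 < σm) (σa : Fin K → ℝ) (hσa : ∀ k, 0 < σa k)
    (lam' : Fin K → ℝ) (hmem : memSimplex lam')
    (hargmin : ∀ α : Fin K → ℝ, memSimplex α →
      fObj N d K Sigx wm wk σa lam' ≤ fObj N d K Sigx wm wk σa α)
    (hfpos : 0 < fObj N d K Sigx wm wk σa lam')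
    (Λstar : ℝ)
    (hΛstar : Λstar = σm ^ 2 * ((d : ℝ) / ((N : ℝ) - (d : ℝ) - 1)) *
      (1 / fObj N d K Sigx wm wk σa lam'))
    (lamstar : Fin K → ℝ) (hlamstar : ∀ k, lamstar k = Λstar * lam' k) :
    (∀ lam : Fin K → ℝ, (∀ k, 0 ≤ lam k) → 0 < ∑ k, lam k →
      EKform N d K Sigx wm wk σm σa lamstar ≤ EKform N d K Sigx wm wk σm σa lam) ∧
    (K = 1 → ∀ k, lam' k = 1 ∧ lamstar k = Λstar) :=
  optimal_weights_general N d K hN Sigx wm wk σm σa lam' hmem hargmin hfpos Λstar hΛstar lamstar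
    hlamstar

end Stmt2
end
end

section
/- Let S, Z ∈ R^{m×n}, M = S + Z, and q ∈ {1,…,rank(S)}. Let P_U = U_{:,q}U_{:,q}^T be the orthogonal projection onto the span of the top q left singular vectors of S, and let P̂_U = Û_{:,q}Û_{:,q}^T be the orthogonal projection onto the span of any choice of top q left singular vectors of M. If (σ_q(S) − σ_{q+1}(S))/||Z|| ≥ r for some r > 1, then ||P̂_U − P_U|| ≤ ||Z||/(σ_q(S) − σ_{q+1}(S) − ||Z||) ≤ 1/(r − 1), where ||·|| is the spectral norm and σ_j(·) the j-th largest singular value. -/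
/-!
The spectral norm `spec` is Mathlib's `L²` operator norm on matrices, and for any SVD
`A = U Σ Vᵀ` the Eckart–Young theorem reads `σ_{k+1}(A) = ‖(1 - P_k) A‖`, `P_k` the projection onto
the top `k` left singular vectors; its lower bound comes from a nonzero vector killed by `B` in the
span of the top `k + 1` right singular vectors.

Let `P, Q` and `P̂, Q̂` be the top-`q` left and right singular projections of `S` and of
`M = S + Z`. From `(1 - P̂) S Q = (1 - P̂) M (1 - Q̂) Q - (1 - P̂) Z Q` and `P = S Q N` with
`‖N‖ ≤ 1 / σ_q(S)` one gets `σ_q(S) ‖(1 - P̂) P‖ ≤ σ_{q+1}(M) ‖(1 - Q̂) Q‖ + ‖Z‖`, and the same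
inequality with left and right exchanged (apply it to the transposes). Together they give
`‖(1 - P̂) P‖ ≤ ‖Z‖ / (σ_q(S) - σ_{q+1}(M))`; exchanging `S` and `M` bounds `‖(1 - P) P̂‖` in the
same way, and `‖P̂ - P‖` is the larger of the two since both are orthogonal projections. Weyl's
inequality `σ_i(S + Z) ≤ σ_i(S) + ‖Z‖` turns both denominators into `σ_q(S) - σ_{q+1}(S) - ‖Z‖`.
-/

open Matrix

noncomputable section

namespace Stmt14

/-- Euclidean norm of a vector in `ℝ^n`. -/
def norm2 {n : ℕ} (v : Fin n → ℝ) : ℝ := Real.sqrt (∑ i, v i ^ 2)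

/-- Spectral norm (`ℓ₂` operator norm) of a real matrix. -/
def spec {m n : ℕ} (A : Matrix (Fin m) (Fin n) ℝ) : ℝ :=
  sSup {c : ℝ | ∃ x : Fin n → ℝ, norm2 x = 1 ∧ c = norm2 (A *ᵥ x)}

/-- `i`-th largest singular value (1-indexed), via the Eckart–Young–Mirsky
characterization `σ_i(A) = inf { ‖A − B‖ : rank B ≤ i − 1 }`. -/
def singVal {m n : ℕ} (A : Matrix (Fin m) (Fin n) ℝ) (i : ℕ) : ℝ :=
  sInf {c : ℝ | ∃ B : Matrix (Fin m) (Fin n) ℝ, B.rank < i ∧ c = spec (A - B)}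

/-- Rectangular diagonal matrix with diagonal entries `σs 0 ≥ σs 1 ≥ …`. -/
def diagMat (m n : ℕ) (σs : ℕ → ℝ) : Matrix (Fin m) (Fin n) ℝ :=
  Matrix.of fun i j => if (i : ℕ) = (j : ℕ) then σs (i : ℕ) else 0

/-- Orthogonal projection `U_{:,q} U_{:,q}ᵀ` onto the span of the first `q` columns of `U`. -/
def projTop (m q : ℕ) (U : Matrix (Fin m) (Fin m) ℝ) : Matrix (Fin m) (Fin m) ℝ :=
  Matrix.of fun i i' => ∑ jj : Fin m, if (jj : ℕ) < q then U i jj * U i' jj else 0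

open scoped Matrix.Norms.L2Operator

variable {m n p : ℕ}

theorem norm2_eq_norm (v : Fin n → ℝ) : norm2 v = ‖WithLp.toLp 2 v‖ := by
  simp [norm2, EuclideanSpace.norm_eq]

theorem spec_eq_norm (A : Matrix (Fin m) (Fin n) ℝ) : spec A = ‖A‖ := by
  rw [l2_opNorm_def, ← ContinuousLinearMap.sSup_sphere_eq_norm, spec]
  congr 1
  ext c
  constructor
  · rintro ⟨x, hx, rfl⟩
    exact ⟨WithLp.toLp 2 x, by simpa [norm2_eq_norm] using hx, by simp [norm2_eq_norm]⟩
  · rintro ⟨x, hx, rfl⟩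
    exact ⟨x.ofLp, by simpa [norm2_eq_norm] using hx, by rw [norm2_eq_norm]; rfl⟩

theorem l2_opNorm_transpose (A : Matrix (Fin m) (Fin n) ℝ) : ‖Aᵀ‖ = ‖A‖ := by
  rw [← conjTranspose_eq_transpose_of_trivial, l2_opNorm_conjTranspose]

theorem norm_le_one_of_transpose_mul_self {U : Matrix (Fin m) (Fin n) ℝ} (hU : Uᵀ * U = 1) :
    ‖U‖ ≤ 1 := by
  have h : ‖U‖ * ‖U‖ ≤ 1 := by
    rw [← l2_opNorm_conjTranspose_mul_self, conjTranspose_eq_transpose_of_trivial, hU]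
    exact IsStarProjection.norm_le _ (.one _)
  nlinarith [norm_nonneg U]

theorem norm_mul_mul_transpose_le {U : Matrix (Fin m) (Fin m) ℝ} {V : Matrix (Fin n) (Fin n) ℝ}
    (hU : Uᵀ * U = 1) (hV : Vᵀ * V = 1) (X : Matrix (Fin m) (Fin n) ℝ) : ‖U * X * Vᵀ‖ ≤ ‖X‖ :=
  calc ‖U * X * Vᵀ‖ ≤ ‖U‖ * ‖X‖ * ‖Vᵀ‖ := by grw [l2_opNorm_mul, l2_opNorm_mul]
    _ ≤ 1 * ‖X‖ * 1 := by
      grw [norm_le_one_of_transpose_mul_self hU, l2_opNorm_transpose,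
        norm_le_one_of_transpose_mul_self hV]
    _ = ‖X‖ := by ring

theorem mul_mul_transpose_mul_mul_mul_transpose {U : Matrix (Fin m) (Fin m) ℝ}
    {V : Matrix (Fin n) (Fin n) ℝ} {W : Matrix (Fin p) (Fin p) ℝ} (hV : Vᵀ * V = 1)
    (X : Matrix (Fin m) (Fin n) ℝ) (Y : Matrix (Fin n) (Fin p) ℝ) :
    U * X * Vᵀ * (V * Y * Wᵀ) = U * (X * Y) * Wᵀ := by
  simp only [Matrix.mul_assoc]
  rw [← Matrix.mul_assoc Vᵀ, hV, Matrix.one_mul]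

theorem diagMat_congr {f g : ℕ → ℝ} (h : ∀ k < m, k < n → f k = g k) :
    diagMat m n f = diagMat m n g := by
  ext i j
  simp only [diagMat, of_apply]
  split_ifs with hij
  · exact h i i.isLt (hij ▸ j.isLt)
  · rfl

theorem diagMat_zero : diagMat m n 0 = 0 := by
  ext
  simp [diagMat]

theorem diagMat_mul_diagMat (f g : ℕ → ℝ) :
    diagMat m n f * diagMat n p g = diagMat m p (fun k => if k < n then f k * g k else 0) := by
  ext i j
  simp only [diagMat, mul_apply, of_apply]
  by_cases hi : (i : ℕ) < n
  · rw [Finset.sum_eq_single ⟨i, hi⟩ (fun b _ hb => by simp [Ne.symm (Fin.val_ne_of_ne hb)])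
      (by simp)]
    by_cases hij : (i : ℕ) = j
    · simp [hij, hij ▸ hi]
    · simp [hij]
  · rw [Finset.sum_eq_zero fun b _ => by simp [show (i : ℕ) ≠ b by omega]]
    split_ifs <;> simp_all

theorem transpose_diagMat (f : ℕ → ℝ) : (diagMat m n f)ᵀ = diagMat n m f := by
  ext i j
  simp only [diagMat, transpose_apply, of_apply, eq_comm (a := (j : ℕ))]
  split_ifs with h <;> simp [h]

theorem diagMat_self (f : ℕ → ℝ) : diagMat n n f = diagonal fun i : Fin n => f i := by
  ext i j
  simp [diagMat, diagonal_apply, Fin.ext_iff]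

theorem diagMat_one : diagMat n n (fun _ => 1) = 1 := by
  rw [diagMat_self, diagonal_one]

theorem norm_diagonal_le {v : Fin n → ℝ} {c : ℝ} (hc : 0 ≤ c) (h : ∀ i, |v i| ≤ c) :
    ‖diagonal v‖ ≤ c := by
  rw [l2_opNorm_diagonal]
  exact (pi_norm_le_iff_of_nonneg hc).2 fun i => by simpa using h i

theorem norm_diagMat_le {f : ℕ → ℝ} {c : ℝ} (hc : 0 ≤ c) (h : ∀ k < m, k < n → |f k| ≤ c) :
    ‖diagMat m n f‖ ≤ c := by
  set R := diagMat m n fun _ => 1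
  have hR : ‖R‖ ≤ 1 := by
    have : ‖R‖ * ‖R‖ ≤ 1 := by
      rw [← l2_opNorm_conjTranspose_mul_self, conjTranspose_eq_transpose_of_trivial,
        transpose_diagMat, diagMat_mul_diagMat, diagMat_self]
      exact norm_diagonal_le zero_le_one fun i => by split_ifs <;> simp
    nlinarith [norm_nonneg R]
  have hf : diagMat m n f = R * diagMat n n fun k => if k < m then f k else 0 := by
    rw [diagMat_mul_diagMat]
    exact diagMat_congr fun k hkm hkn => by simp [hkm, hkn]
  calc ‖diagMat m n f‖ ≤ ‖R‖ * ‖diagMat n n fun k => if k < m then f k else 0‖ := by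
        rw [hf]; exact l2_opNorm_mul _ _
    _ ≤ 1 * c := by
        gcongr
        rw [diagMat_self]
        refine norm_diagonal_le hc fun i => ?_
        split_ifs with hi
        · exact h i hi i.isLt
        · simpa using hc
    _ = c := one_mul c

theorem exists_ne_zero_mul_eq_zero_of_rank_lt {K : Type*} [Field K] {Y : Matrix (Fin m) (Fin p) K}
    (h : Y.rank < p) : ∃ X : Matrix (Fin p) (Fin 1) K, X ≠ 0 ∧ Y * X = 0 := by
  by_contra! hY
  have hinj : Function.Injective Y.mulVecLin := by
    rw [← LinearMap.ker_eq_bot, ker_mulVecLin_eq_bot_iff]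
    intro v hv
    by_contra hv0
    refine hY (replicateCol (Fin 1) v) (fun h0 => hv0 ?_) ?_
    · ext i
      simpa using congrFun (congrFun h0 i) 0
    · rw [← replicateCol_mulVec, hv, replicateCol_zero]
  have := LinearMap.finrank_range_of_inj hinj
  rw [Module.finrank_fin_fun] at this
  exact h.ne this

theorem one_le_norm_mul_norm_sub_of_rank_lt {A B : Matrix (Fin m) (Fin n) ℝ}
    {C : Matrix (Fin n) (Fin p) ℝ} {L : Matrix (Fin p) (Fin m) ℝ} (hC : ‖C‖ ≤ 1)
    (hL : L * A * C = 1) (hB : B.rank < p) : 1 ≤ ‖L‖ * ‖A - B‖ := by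
  obtain ⟨X, hX0, hX⟩ := exists_ne_zero_mul_eq_zero_of_rank_lt ((rank_mul_le_left B C).trans_lt hB)
  have hXeq : X = L * (A - B) * C * X :=
    calc X = L * A * C * X - L * (B * C * X) := by
          rw [hL, hX, Matrix.mul_zero, sub_zero, Matrix.one_mul]
      _ = L * (A - B) * C * X := by simp only [Matrix.mul_sub, Matrix.sub_mul, Matrix.mul_assoc]
  have hXpos : 0 < ‖X‖ := norm_pos_iff.2 hX0
  have : 1 * ‖X‖ ≤ ‖L‖ * ‖A - B‖ * ‖X‖ :=
    calc 1 * ‖X‖ = ‖L * (A - B) * C * X‖ := by rw [one_mul, ← hXeq]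
      _ ≤ ‖L‖ * ‖A - B‖ * ‖C‖ * ‖X‖ := by grw [l2_opNorm_mul, l2_opNorm_mul, l2_opNorm_mul]
      _ ≤ ‖L‖ * ‖A - B‖ * 1 * ‖X‖ := by gcongr
      _ = ‖L‖ * ‖A - B‖ * ‖X‖ := by ring
  exact le_of_mul_le_mul_right this hXpos

theorem projTop_eq (q : ℕ) (U : Matrix (Fin m) (Fin m) ℝ) :
    projTop m q U = U * diagMat m m (fun k => if k < q then 1 else 0) * Uᵀ := by
  ext i j
  rw [diagMat_self, mul_apply]
  simp only [projTop, mul_diagonal, transpose_apply, of_apply]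
  exact Finset.sum_congr rfl fun k _ => by split_ifs <;> ring

theorem one_sub_projTop {U : Matrix (Fin m) (Fin m) ℝ} (hU : Uᵀ * U = 1) (q : ℕ) :
    1 - projTop m q U = U * diagMat m m (fun k => if k < q then 0 else 1) * Uᵀ := by
  have h1 : (1 : Matrix (Fin m) (Fin m) ℝ) = U * diagMat m m (fun _ => 1) * Uᵀ := by
    rw [diagMat_self, diagonal_one, Matrix.mul_one, mul_eq_one_comm.mp hU]
  rw [projTop_eq, h1, ← Matrix.sub_mul, ← Matrix.mul_sub, diagMat_self, diagMat_self,
    diagMat_self, diagonal_sub]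
  congr 3
  ext k
  split_ifs <;> simp

theorem isStarProjection_mul_diagMat_mul_transpose {U : Matrix (Fin m) (Fin m) ℝ}
    (hU : Uᵀ * U = 1) {f : ℕ → ℝ} (hf : ∀ k, f k * f k = f k) :
    IsStarProjection (U * diagMat m m f * Uᵀ) where
  isIdempotentElem := by
    rw [IsIdempotentElem, mul_mul_transpose_mul_mul_mul_transpose hU, diagMat_mul_diagMat]
    exact congrArg (U * · * Uᵀ) (diagMat_congr fun k hk _ => by simp [hk, hf])
  isSelfAdjoint := by
    rw [IsSelfAdjoint, star_eq_conjTranspose, conjTranspose_eq_transpose_of_trivial,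
      transpose_mul, transpose_mul, transpose_transpose, transpose_diagMat, Matrix.mul_assoc]

theorem isStarProjection_projTop {U : Matrix (Fin m) (Fin m) ℝ} (hU : Uᵀ * U = 1) (q : ℕ) :
    IsStarProjection (projTop m q U) := by
  rw [projTop_eq]
  exact isStarProjection_mul_diagMat_mul_transpose hU fun k => by split_ifs <;> simp

section StarProjection

variable {𝕜 E : Type*} [RCLike 𝕜] [NormedAddCommGroup E] [InnerProductSpace 𝕜 E] [CompleteSpace E]

theorem _root_.IsStarProjection.inner_apply_one_sub_apply {p : E →L[𝕜] E}
    (hp : IsStarProjection p) (x y : E) : inner 𝕜 (p x) ((1 - p) y) = 0 := by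
  rw [← ContinuousLinearMap.adjoint_inner_right, hp.isSelfAdjoint.adjoint_eq,
    ← mul_apply_eq_comp, hp.mul_one_sub_self, _root_.zero_apply, inner_zero_right]

theorem _root_.IsStarProjection.norm_sq_add_norm_sq {p : E →L[𝕜] E} (hp : IsStarProjection p)
    (x : E) : ‖p x‖ ^ 2 + ‖(1 - p) x‖ ^ 2 = ‖x‖ ^ 2 := by
  have h := norm_add_sq (𝕜 := 𝕜) (p x) ((1 - p) x)
  rw [hp.inner_apply_one_sub_apply, map_zero, mul_zero, add_zero,
    show p x + (1 - p) x = x by simp] at h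
  exact h.symm

theorem _root_.IsStarProjection.norm_sub_le_max {p q : E →L[𝕜] E} (hp : IsStarProjection p)
    (hq : IsStarProjection q) : ‖q - p‖ ≤ max ‖(1 - q) * p‖ ‖(1 - p) * q‖ := by
  have hswap : ‖q * (1 - p)‖ = ‖(1 - p) * q‖ := by
    rw [← norm_star, star_mul, hq.isSelfAdjoint.star_eq, hp.one_sub.isSelfAdjoint.star_eq]
  refine (q - p).opNorm_le_bound (by positivity) fun x => ?_
  have h1 : ‖q ((1 - p) x)‖ ≤ max ‖(1 - q) * p‖ ‖(1 - p) * q‖ * ‖(1 - p) x‖ :=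
    calc ‖q ((1 - p) x)‖ = ‖(q * (1 - p)) ((1 - p) x)‖ := by
          rw [mul_apply_eq_comp, ← mul_apply_eq_comp (1 - p), hp.one_sub.isIdempotentElem.eq]
      _ ≤ ‖q * (1 - p)‖ * ‖(1 - p) x‖ := ContinuousLinearMap.le_opNorm _ _
      _ ≤ _ := by rw [hswap]; gcongr; exact le_max_right _ _
  have h2 : ‖(1 - q) (p x)‖ ≤ max ‖(1 - q) * p‖ ‖(1 - p) * q‖ * ‖p x‖ :=
    calc ‖(1 - q) (p x)‖ = ‖((1 - q) * p) (p x)‖ := by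
          rw [mul_apply_eq_comp, ← mul_apply_eq_comp p, hp.isIdempotentElem.eq]
      _ ≤ ‖(1 - q) * p‖ * ‖p x‖ := ContinuousLinearMap.le_opNorm _ _
      _ ≤ _ := by gcongr; exact le_max_left _ _
  have hpyth : ‖(q - p) x‖ ^ 2 = ‖q ((1 - p) x)‖ ^ 2 + ‖(1 - q) (p x)‖ ^ 2 := by
    rw [show (q - p) x = q ((1 - p) x) - (1 - q) (p x) by simp, norm_sub_sq (𝕜 := 𝕜),
      hq.inner_apply_one_sub_apply, map_zero, mul_zero, sub_zero]
  refine (pow_le_pow_iff_left₀ (norm_nonneg _) (by positivity) two_ne_zero).1 ?_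
  rw [hpyth, mul_pow, ← hp.norm_sq_add_norm_sq x]
  nlinarith [pow_le_pow_left₀ (norm_nonneg _) h1 2, pow_le_pow_left₀ (norm_nonneg _) h2 2]

end StarProjection

theorem norm_sub_le_max_of_isStarProjection {P Q : Matrix (Fin m) (Fin m) ℝ}
    (hP : IsStarProjection P) (hQ : IsStarProjection Q) :
    ‖Q - P‖ ≤ max ‖(1 - Q) * P‖ ‖(1 - P) * Q‖ := by
  simpa only [← l2_opNorm_toEuclideanCLM, map_sub, map_mul, map_one] using
    (hP.map toEuclideanCLM).norm_sub_le_max (hQ.map toEuclideanCLM)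

theorem rank_projTop_le (q : ℕ) (U : Matrix (Fin m) (Fin m) ℝ) : (projTop m q U).rank ≤ q := by
  have hfac : diagMat m m (fun k => if k < q then (1 : ℝ) else 0) =
      diagMat m q (fun _ => 1) * diagMat q m (fun _ => 1) := by
    rw [diagMat_mul_diagMat]
    exact diagMat_congr fun k _ _ => by simp
  rw [projTop_eq, hfac]
  calc (U * (diagMat m q (fun _ => 1) * diagMat q m (fun _ => 1)) * Uᵀ).rank
      ≤ (diagMat m q (fun _ => 1) * diagMat q m (fun _ => 1)).rank :=
        (rank_mul_le_left _ _).trans (rank_mul_le_right _ _)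
    _ ≤ q := (rank_mul_le_left _ _).trans (rank_le_width _)

theorem singVal_le_norm_sub (A : Matrix (Fin m) (Fin n) ℝ) {B : Matrix (Fin m) (Fin n) ℝ}
    {i : ℕ} (hB : B.rank < i) : singVal A i ≤ ‖A - B‖ :=
  csInf_le ⟨0, by rintro _ ⟨B, _, rfl⟩; exact spec_eq_norm _ ▸ norm_nonneg _⟩
    ⟨B, hB, (spec_eq_norm _).symm⟩

theorem le_singVal {A : Matrix (Fin m) (Fin n) ℝ} {i : ℕ} (hi : 0 < i) {c : ℝ}
    (h : ∀ B : Matrix (Fin m) (Fin n) ℝ, B.rank < i → c ≤ ‖A - B‖) : c ≤ singVal A i :=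
  le_csInf ⟨_, 0, by rwa [rank_zero], rfl⟩ fun _ ⟨B, hB, hc⟩ => hc ▸ spec_eq_norm (A - B) ▸ h B hB

theorem singVal_nonneg (A : Matrix (Fin m) (Fin n) ℝ) (i : ℕ) : 0 ≤ singVal A i :=
  Real.sInf_nonneg fun _ ⟨B, _, hc⟩ => hc ▸ spec_eq_norm (A - B) ▸ norm_nonneg _

theorem singVal_add_le (S Z : Matrix (Fin m) (Fin n) ℝ) {i : ℕ} (hi : 0 < i) :
    singVal (S + Z) i ≤ singVal S i + ‖Z‖ := by
  rw [← sub_le_iff_le_add]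
  refine le_singVal hi fun B hB => sub_le_iff_le_add.2 ?_
  calc singVal (S + Z) i ≤ ‖S - B + Z‖ := sub_add_eq_add_sub S B Z ▸ singVal_le_norm_sub _ hB
    _ ≤ ‖S - B‖ + ‖Z‖ := norm_add_le _ _

theorem singVal_transpose (A : Matrix (Fin m) (Fin n) ℝ) (i : ℕ) : singVal Aᵀ i = singVal A i := by
  simp only [singVal, spec_eq_norm]
  congr 1
  ext c
  constructor
  · rintro ⟨B, hB, rfl⟩
    exact ⟨Bᵀ, by rwa [rank_transpose],
      by rw [← l2_opNorm_transpose, transpose_sub, transpose_transpose]⟩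
  · rintro ⟨B, hB, rfl⟩
    exact ⟨Bᵀ, by rwa [rank_transpose], by rw [← l2_opNorm_transpose, transpose_sub]⟩

theorem le_div_sub_of_mul_le_mul_add {a b x y z : ℝ} (hb : 0 ≤ b) (hab : b < a)
    (h₁ : a * x ≤ b * y + z) (h₂ : a * y ≤ b * x + z) : x ≤ z / (a - b) := by
  rw [le_div_iff₀ (sub_pos.2 hab)]
  rcases le_total x y with hxy | hxy <;> nlinarith

theorem mul_norm_one_sub_mul_le {S M : Matrix (Fin m) (Fin n) ℝ} {P P' : Matrix (Fin m) (Fin m) ℝ}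
    {Q Q' : Matrix (Fin n) (Fin n) ℝ} {N : Matrix (Fin n) (Fin m) ℝ} {σ : ℝ} (hσ : 0 ≤ σ)
    (hP : P = S * Q * N) (hN : σ * ‖N‖ ≤ 1) (hMQ' : (1 - P') * M * Q' = 0) (hP' : ‖1 - P'‖ ≤ 1)
    (hQ : ‖Q‖ ≤ 1) :
    σ * ‖(1 - P') * P‖ ≤ ‖(1 - P') * M‖ * ‖(1 - Q') * Q‖ + ‖M - S‖ := by
  have hMQ : (1 - P') * M * ((1 - Q') * Q) = (1 - P') * M * Q := by
    rw [Matrix.sub_mul 1 Q', Matrix.one_mul, Matrix.mul_sub, ← Matrix.mul_assoc _ Q', hMQ',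
      Matrix.zero_mul, sub_zero]
  have hsplit : (1 - P') * P = ((1 - P') * M * ((1 - Q') * Q) - (1 - P') * (M - S) * Q) * N := by
    rw [hMQ, hP]
    simp only [Matrix.mul_sub, Matrix.sub_mul, Matrix.mul_assoc]
    abel
  set X := ‖(1 - P') * M‖ * ‖(1 - Q') * Q‖ + ‖M - S‖
  have hX : ‖(1 - P') * M * ((1 - Q') * Q) - (1 - P') * (M - S) * Q‖ ≤ X :=
    calc _ ≤ ‖(1 - P') * M‖ * ‖(1 - Q') * Q‖ + ‖1 - P'‖ * ‖M - S‖ * ‖Q‖ := by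
          refine (norm_sub_le _ _).trans (add_le_add (l2_opNorm_mul _ _) ?_)
          grw [l2_opNorm_mul _ Q, l2_opNorm_mul (1 - P')]
      _ ≤ X := by grw [hP', hQ, one_mul, mul_one]
  have hX0 : 0 ≤ X := by positivity
  calc σ * ‖(1 - P') * P‖ ≤ σ * (X * ‖N‖) := by rw [hsplit]; grw [l2_opNorm_mul, hX]
    _ = X * (σ * ‖N‖) := by ring
    _ ≤ X := mul_le_of_le_one_right hX0 hN

structure IsSVD (A : Matrix (Fin m) (Fin n) ℝ) (U : Matrix (Fin m) (Fin m) ℝ)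
    (V : Matrix (Fin n) (Fin n) ℝ) (σ : ℕ → ℝ) : Prop where
  transpose_mul_left : Uᵀ * U = 1
  transpose_mul_right : Vᵀ * V = 1
  antitone : Antitone σ
  nonneg : ∀ k, 0 ≤ σ k
  eq_mul : A = U * diagMat m n σ * Vᵀ

namespace IsSVD

variable {A S M : Matrix (Fin m) (Fin n) ℝ} {U U' : Matrix (Fin m) (Fin m) ℝ}
  {V V' : Matrix (Fin n) (Fin n) ℝ} {σ σ' : ℕ → ℝ}

theorem transpose (h : IsSVD A U V σ) : IsSVD Aᵀ V U σ where
  transpose_mul_left := h.transpose_mul_right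
  transpose_mul_right := h.transpose_mul_left
  antitone := h.antitone
  nonneg := h.nonneg
  eq_mul := by
    rw [h.eq_mul, transpose_mul, transpose_mul, transpose_transpose, transpose_diagMat,
      Matrix.mul_assoc]

theorem one_sub_projTop_mul (h : IsSVD A U V σ) (k : ℕ) :
    (1 - projTop m k U) * A = U * diagMat m n (fun t => if t < k then 0 else σ t) * Vᵀ := by
  rw [one_sub_projTop h.transpose_mul_left, h.eq_mul,
    mul_mul_transpose_mul_mul_mul_transpose h.transpose_mul_left, diagMat_mul_diagMat]
  exact congrArg (U * · * Vᵀ) (diagMat_congr fun t ht _ => by simp [ht])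

theorem one_sub_projTop_mul_mul_projTop (h : IsSVD A U V σ) (k : ℕ) :
    (1 - projTop m k U) * A * projTop n k V = 0 := by
  rw [h.one_sub_projTop_mul, projTop_eq,
    mul_mul_transpose_mul_mul_mul_transpose h.transpose_mul_right, diagMat_mul_diagMat,
    diagMat_congr (g := 0) fun t _ ht => by by_cases htk : t < k <;> simp [htk, ht], diagMat_zero,
    Matrix.mul_zero, Matrix.zero_mul]

theorem norm_one_sub_projTop_mul_le (h : IsSVD A U V σ) (k : ℕ) :
    ‖(1 - projTop m k U) * A‖ ≤ σ k := by
  rw [h.one_sub_projTop_mul]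
  refine (norm_mul_mul_transpose_le h.transpose_mul_left h.transpose_mul_right _).trans
    (norm_diagMat_le (h.nonneg k) fun t _ _ => ?_)
  split_ifs with ht
  · simpa using h.nonneg k
  · rw [abs_of_nonneg (h.nonneg t)]
    exact h.antitone (not_lt.1 ht)

theorem norm_diagMat_inv_le (h : IsSVD A U V σ) {a b k : ℕ} (hσ : 0 < σ k) :
    ‖diagMat a b (fun t => if t ≤ k then (σ t)⁻¹ else 0)‖ ≤ (σ k)⁻¹ := by
  refine norm_diagMat_le (by positivity) fun t _ _ => ?_
  split_ifs with htk
  · rw [abs_of_nonneg (inv_nonneg.2 (h.nonneg t))]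
    exact inv_anti₀ hσ (h.antitone htk)
  · simpa using hσ.le

theorem exists_projTop_eq_mul (h : IsSVD A U V σ) {k : ℕ} (hk : k < n) (hσ : 0 < σ k) :
    ∃ N : Matrix (Fin n) (Fin m) ℝ,
      projTop m (k + 1) U = A * projTop n (k + 1) V * N ∧ σ k * ‖N‖ ≤ 1 := by
  -- the pseudo-inverse of the rank-`(k + 1)` truncation of the SVD
  refine ⟨V * diagMat n m (fun t => if t ≤ k then (σ t)⁻¹ else 0) * Uᵀ, ?_, ?_⟩
  · rw [projTop_eq, projTop_eq, h.eq_mul,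
      mul_mul_transpose_mul_mul_mul_transpose h.transpose_mul_right,
      mul_mul_transpose_mul_mul_mul_transpose h.transpose_mul_right, diagMat_mul_diagMat,
      diagMat_mul_diagMat]
    refine congrArg (U * · * Uᵀ) (diagMat_congr fun t _ _ => ?_)
    by_cases htk : t ≤ k
    · have : σ t ≠ 0 := (hσ.trans_le (h.antitone htk)).ne'
      simp [htk, Nat.lt_succ_of_le htk, htk.trans_lt hk, this]
    · simp [htk, show ¬t < k + 1 by omega]
  · calc σ k * ‖V * diagMat n m (fun t => if t ≤ k then (σ t)⁻¹ else 0) * Uᵀ‖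
        ≤ σ k * (σ k)⁻¹ := by
          grw [norm_mul_mul_transpose_le h.transpose_mul_right h.transpose_mul_left,
            h.norm_diagMat_inv_le hσ]
      _ = 1 := mul_inv_cancel₀ hσ.ne'

theorem le_norm_sub (h : IsSVD A U V σ) {k : ℕ} (hkm : k < m) (hkn : k < n)
    {B : Matrix (Fin m) (Fin n) ℝ} (hB : B.rank ≤ k) : σ k ≤ ‖A - B‖ := by
  rcases (h.nonneg k).eq_or_lt with hσ | hσ
  · rw [← hσ]
    exact norm_nonneg _
  -- `L` inverts `A` on the span of the top `k + 1` right singular vectors, the columns of `C`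
  set L := diagMat (k + 1) m (fun t => if t ≤ k then (σ t)⁻¹ else 0) * Uᵀ
  set C := V * diagMat n (k + 1) (fun _ => 1)
  have hC : ‖C‖ ≤ 1 := by
    grw [l2_opNorm_mul, norm_le_one_of_transpose_mul_self h.transpose_mul_right,
      norm_diagMat_le zero_le_one fun _ _ _ => by simp, one_mul]
  have hLAC : L * A * C = 1 := by
    rw [h.eq_mul]
    simp only [L, C, Matrix.mul_assoc]
    rw [← Matrix.mul_assoc Uᵀ U, h.transpose_mul_left, Matrix.one_mul,
      ← Matrix.mul_assoc Vᵀ V, h.transpose_mul_right, Matrix.one_mul, ← Matrix.mul_assoc,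
      diagMat_mul_diagMat, diagMat_mul_diagMat, ← diagMat_one]
    refine diagMat_congr fun t ht _ => ?_
    have : σ t ≠ 0 := (hσ.trans_le (h.antitone (Nat.lt_succ_iff.1 ht))).ne'
    simp [Nat.lt_succ_iff.1 ht, ht.trans_le hkm, ht.trans_le hkn, this]
  have hLB := one_le_norm_mul_norm_sub_of_rank_lt hC hLAC (Nat.lt_succ_of_le hB)
  have hL : ‖L‖ ≤ (σ k)⁻¹ := by
    grw [l2_opNorm_mul, h.norm_diagMat_inv_le hσ, l2_opNorm_transpose,
      norm_le_one_of_transpose_mul_self h.transpose_mul_left, mul_one]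
  calc σ k ≤ σ k * (‖L‖ * ‖A - B‖) := le_mul_of_one_le_right hσ.le hLB
    _ ≤ σ k * ((σ k)⁻¹ * ‖A - B‖) := by gcongr
    _ = ‖A - B‖ := by field_simp

theorem singVal_succ_eq (h : IsSVD A U V σ) (k : ℕ) :
    singVal A (k + 1) = ‖(1 - projTop m k U) * A‖ := by
  refine le_antisymm ?_ (le_singVal k.succ_pos fun B hB => ?_)
  · simpa [Matrix.sub_mul] using
      singVal_le_norm_sub A
        (((rank_mul_le_left _ A).trans (rank_projTop_le k U)).trans_lt k.lt_succ_self)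
  by_cases hk : k < m ∧ k < n
  · exact (h.norm_one_sub_projTop_mul_le k).trans (h.le_norm_sub hk.1 hk.2 (Nat.lt_succ_iff.1 hB))
  · refine le_trans ?_ (norm_nonneg (A - B))
    rw [h.one_sub_projTop_mul]
    exact (norm_mul_mul_transpose_le h.transpose_mul_left h.transpose_mul_right _).trans
      (norm_diagMat_le le_rfl fun t htm htn => by simp [show t < k by omega])

theorem singVal_succ_le (h : IsSVD A U V σ) (k : ℕ) : singVal A (k + 1) ≤ σ k :=
  (h.singVal_succ_eq k).trans_le (h.norm_one_sub_projTop_mul_le k)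

theorem singVal_mul_norm_one_sub_projTop_mul_projTop_le (hS : IsSVD S U V σ)
    (hM : IsSVD M U' V' σ') {k : ℕ} (hk : k < n) (hpos : 0 < singVal S (k + 1)) :
    singVal S (k + 1) * ‖(1 - projTop m (k + 1) U') * projTop m (k + 1) U‖ ≤
      singVal M (k + 1 + 1) * ‖(1 - projTop n (k + 1) V') * projTop n (k + 1) V‖ + ‖M - S‖ := by
  have hσ : 0 < σ k := hpos.trans_le (hS.singVal_succ_le k)
  obtain ⟨N, hP, hN⟩ := hS.exists_projTop_eq_mul hk hσ
  have h := mul_norm_one_sub_mul_le hσ.le hP hN (hM.one_sub_projTop_mul_mul_projTop (k + 1))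
    ((isStarProjection_projTop hM.transpose_mul_left _).one_sub.norm_le)
    ((isStarProjection_projTop hS.transpose_mul_right _).norm_le)
  rw [← hM.singVal_succ_eq] at h
  exact le_trans (by gcongr; exact hS.singVal_succ_le k) h

theorem norm_one_sub_projTop_mul_projTop_le (hS : IsSVD S U V σ) (hM : IsSVD M U' V' σ')
    {k : ℕ} (hkm : k < m) (hkn : k < n) (hgap : singVal M (k + 1 + 1) < singVal S (k + 1)) :
    ‖(1 - projTop m (k + 1) U') * projTop m (k + 1) U‖ ≤
      ‖M - S‖ / (singVal S (k + 1) - singVal M (k + 1 + 1)) := by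
  have hpos : 0 < singVal S (k + 1) := (singVal_nonneg M _).trans_lt hgap
  have h₁ := hS.singVal_mul_norm_one_sub_projTop_mul_projTop_le hM hkn hpos
  have h₂ := hS.transpose.singVal_mul_norm_one_sub_projTop_mul_projTop_le hM.transpose hkm
    (by rwa [singVal_transpose])
  rw [singVal_transpose, singVal_transpose, ← transpose_sub, l2_opNorm_transpose] at h₂
  exact le_div_sub_of_mul_le_mul_add (singVal_nonneg M _) hgap h₁ h₂

end IsSVD

/-- Wedin `sin Θ` + Weyl: if `(σ_q(S) − σ_{q+1}(S))/‖Z‖ ≥ r > 1`,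
then for the projections `P_U`, `P̂_U` onto the spans of top-`q` left singular vectors
of `S` and of `M = S + Z`,
`‖P̂_U − P_U‖ ≤ ‖Z‖/(σ_q(S) − σ_{q+1}(S) − ‖Z‖) ≤ 1/(r−1)`. -/
theorem projection_perturbation
    (m n : ℕ) (S Z M : Matrix (Fin m) (Fin n) ℝ) (hM : M = S + Z)
    (q : ℕ) (hq1 : 1 ≤ q) (hq2 : q ≤ S.rank)
    (r : ℝ) (hr : 1 < r)
    (hgap : r ≤ (singVal S q - singVal S (q + 1)) / spec Z)
    -- an SVD of the signal matrix `S`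
    (U : Matrix (Fin m) (Fin m) ℝ) (V : Matrix (Fin n) (Fin n) ℝ) (σs : ℕ → ℝ)
    (hU : Uᵀ * U = 1) (hV : Vᵀ * V = 1)
    (hmono : ∀ a b : ℕ, a ≤ b → σs b ≤ σs a) (hnn : ∀ a, 0 ≤ σs a)
    (hSVD : S = U * diagMat m n σs * Vᵀ)
    -- an SVD of the perturbed matrix `M` (any choice of top-`q` left singular vectors)
    (Uh : Matrix (Fin m) (Fin m) ℝ) (Vh : Matrix (Fin n) (Fin n) ℝ) (σsh : ℕ → ℝ)
    (hUh : Uhᵀ * Uh = 1) (hVh : Vhᵀ * Vh = 1)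
    (hmonoh : ∀ a b : ℕ, a ≤ b → σsh b ≤ σsh a) (hnnh : ∀ a, 0 ≤ σsh a)
    (hSVDh : M = Uh * diagMat m n σsh * Vhᵀ) :
    spec (projTop m q Uh - projTop m q U) ≤
        spec Z / (singVal S q - singVal S (q + 1) - spec Z) ∧
      spec Z / (singVal S q - singVal S (q + 1) - spec Z) ≤ 1 / (r - 1) := by
  have hS : IsSVD S U V σs := ⟨hU, hV, hmono, hnn, hSVD⟩
  have hMs : IsSVD M Uh Vh σsh := ⟨hUh, hVh, hmonoh, hnnh, hSVDh⟩
  obtain ⟨k, rfl⟩ : ∃ k, q = k + 1 := ⟨q - 1, by omega⟩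
  have hkm : k < m := hq2.trans_lt' k.lt_succ_self |>.trans_le (rank_le_height S)
  have hkn : k < n := hq2.trans_lt' k.lt_succ_self |>.trans_le (rank_le_width S)
  simp only [spec_eq_norm] at hgap ⊢
  have hz : 0 < ‖Z‖ := by
    refine (norm_nonneg Z).lt_of_ne fun hz => ?_
    rw [← hz, div_zero] at hgap
    linarith
  have hgz : r * ‖Z‖ ≤ singVal S (k + 1) - singVal S (k + 1 + 1) := (le_div_iff₀ hz).1 hgap
  have hd : 0 < singVal S (k + 1) - singVal S (k + 1 + 1) - ‖Z‖ := by nlinarith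
  have hweyl₁ : singVal M (k + 1 + 1) ≤ singVal S (k + 1 + 1) + ‖Z‖ :=
    hM ▸ singVal_add_le S Z (by omega)
  have hweyl₂ : singVal S (k + 1) ≤ singVal M (k + 1) + ‖Z‖ := by
    simpa [hM, norm_neg] using singVal_add_le M (-Z) k.succ_pos
  have hMS : ‖M - S‖ = ‖Z‖ := by rw [hM, add_sub_cancel_left]
  have hfwd := hS.norm_one_sub_projTop_mul_projTop_le hMs hkm hkn (by linarith)
  have hbwd := hMs.norm_one_sub_projTop_mul_projTop_le hS hkm hkn (by linarith)
  rw [hMS] at hfwd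
  rw [norm_sub_rev, hMS] at hbwd
  refine ⟨(norm_sub_le_max_of_isStarProjection (isStarProjection_projTop hU _)
    (isStarProjection_projTop hUh _)).trans (max_le (hfwd.trans ?_) (hbwd.trans ?_)), ?_⟩
  any_goals exact div_le_div_of_nonneg_left hz.le hd (by linarith)
  · rw [div_le_div_iff₀ hd (by linarith)]
    nlinarith

end Stmt14
end
end
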